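/- Let G₁ and G₂ be groups, L a group, H, H′ ≤ G₁ and K, K′ ≤ G₂ subgroups, and let φ : H → L, φ′ : H′ → L, ψ : K → L, ψ′ : K′ → L be surjective group homomorphisms. Then the amalgamated subgroups H ^φ×_L^ψ K and H′ ^{φ′}×_L^{ψ′} K′ are conjugate in G₁ × G₂ if and only if there exist a ∈ G₁, b ∈ G₂ and an automorphism α of L such that H′ = aHa⁻¹, K′ = bKb⁻¹, and for all h ∈ H and k ∈ K one has α(φ′(a h a⁻¹)) = φ(h) and α(ψ′(b k b⁻¹)) = ψ(k). -/
import Mathlib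


/-- The amalgamated subgroup `H ^φ×_L^ψ K = {(h,k) ∈ H × K : φ(h) = ψ(k)}` of `G₁ × G₂`. -/
def amalg {G₁ G₂ : Type*} [Group G₁] [Group G₂] (H : Subgroup G₁) (K : Subgroup G₂)
    {L : Type*} [Group L] (φ : H →* L) (ψ : K →* L) : Subgroup (G₁ × G₂) where
  carrier := {x | ∃ (h₁ : x.1 ∈ H) (h₂ : x.2 ∈ K), φ ⟨x.1, h₁⟩ = ψ ⟨x.2, h₂⟩}
  one_mem' := ⟨H.one_mem, K.one_mem, by
    show φ 1 = ψ 1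
    rw [map_one, map_one]⟩
  mul_mem' := by
    intro a b ha hb
    obtain ⟨ha₁, ha₂, hae⟩ := ha
    obtain ⟨hb₁, hb₂, hbe⟩ := hb
    refine ⟨H.mul_mem ha₁ hb₁, K.mul_mem ha₂ hb₂, ?_⟩
    show φ (⟨a.1, ha₁⟩ * ⟨b.1, hb₁⟩) = ψ (⟨a.2, ha₂⟩ * ⟨b.2, hb₂⟩)
    rw [map_mul, map_mul, hae, hbe]
  inv_mem' := by
    intro a ha
    obtain ⟨ha₁, ha₂, hae⟩ := ha
    refine ⟨H.inv_mem ha₁, K.inv_mem ha₂, ?_⟩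
    show φ (⟨a.1, ha₁⟩⁻¹) = ψ (⟨a.2, ha₂⟩⁻¹)
    rw [map_inv, map_inv, hae]

private lemma mem_amalg {G₁ G₂ : Type*} [Group G₁] [Group G₂] (H : Subgroup G₁)
    (K : Subgroup G₂) {L : Type*} [Group L] (φ : H →* L) (ψ : K →* L) (x : G₁ × G₂) :
    x ∈ amalg H K φ ψ ↔ ∃ (h₁ : x.1 ∈ H) (h₂ : x.2 ∈ K), φ ⟨x.1, h₁⟩ = ψ ⟨x.2, h₂⟩ :=
  Iff.rfl

private lemma hom_congr {G L : Type*} [Group G] [Group L] {H : Subgroup G} (φ : H →* L)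
    {x y : G} (hx : x ∈ H) (hy : y ∈ H) (e : x = y) : φ ⟨x, hx⟩ = φ ⟨y, hy⟩ := by
  subst e; rfl

private lemma conj_prod_symm {G₁ G₂ : Type*} [Group G₁] [Group G₂] (a : G₁) (b : G₂)
    (x : G₁) (y : G₂) :
    (MulAut.conj ((a, b) : G₁ × G₂)).symm (x, y) = (a⁻¹ * x * a, b⁻¹ * y * b) := by
  rw [MulAut.conj_symm_apply]
  rfl

/-- Two amalgamated subgroups `H ^φ×_L^ψ K` and `H′ ^{φ′}×_L^{ψ′} K′` (with all four
homomorphisms surjective) are conjugate in `G₁ × G₂` iff there are `a ∈ G₁`, `b ∈ G₂`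
and an automorphism `α` of `L` with `H′ = aHa⁻¹`, `K′ = bKb⁻¹`,
`α(φ′(aha⁻¹)) = φ(h)` for `h ∈ H`, and `α(ψ′(bkb⁻¹)) = ψ(k)` for `k ∈ K`. -/
theorem amalg_conjugate_iff
    {G₁ G₂ L : Type*} [Group G₁] [Group G₂] [Group L]
    (H H' : Subgroup G₁) (K K' : Subgroup G₂)
    (φ : H →* L) (φ' : H' →* L) (ψ : K →* L) (ψ' : K' →* L)
    (hφ : Function.Surjective φ) (hφ' : Function.Surjective φ')
    (hψ : Function.Surjective ψ) (hψ' : Function.Surjective ψ') :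
    (∃ g : G₁ × G₂, (amalg H K φ ψ).map (MulAut.conj g).toMonoidHom = amalg H' K' φ' ψ') ↔
      ∃ (a : G₁) (b : G₂) (α : L ≃* L),
        H' = H.map (MulAut.conj a).toMonoidHom ∧
        K' = K.map (MulAut.conj b).toMonoidHom ∧
        (∀ (h : G₁) (hh : h ∈ H) (hh' : a * h * a⁻¹ ∈ H'),
          α (φ' ⟨a * h * a⁻¹, hh'⟩) = φ ⟨h, hh⟩) ∧
        (∀ (k : G₂) (hk : k ∈ K) (hk' : b * k * b⁻¹ ∈ K'),
          α (ψ' ⟨b * k * b⁻¹, hk'⟩) = ψ ⟨k, hk⟩) := by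
  constructor
  · rintro ⟨⟨a, b⟩, hg⟩
    have hmem : ∀ x y, (x, y) ∈ amalg H' K' φ' ψ' ↔
        (a⁻¹ * x * a, b⁻¹ * y * b) ∈ amalg H K φ ψ := by
      intro x y
      rw [← hg, Subgroup.mem_map_equiv, conj_prod_symm]
    have hmem2 : ∀ h k, (h, k) ∈ amalg H K φ ψ ↔
        (a * h * a⁻¹, b * k * b⁻¹) ∈ amalg H' K' φ' ψ' := by
      intro h k
      rw [hmem (a * h * a⁻¹) (b * k * b⁻¹),
        show a⁻¹ * (a * h * a⁻¹) * a = h by group,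
        show b⁻¹ * (b * k * b⁻¹) * b = k by group]
    have hHiff : ∀ x, x ∈ H' ↔ a⁻¹ * x * a ∈ H := by
      intro x
      constructor
      · intro hx
        obtain ⟨k', hk'⟩ := hψ' (φ' ⟨x, hx⟩)
        have hp : (x, (k' : G₂)) ∈ amalg H' K' φ' ψ' :=
          (mem_amalg _ _ _ _ _).mpr ⟨hx, k'.2, hk'.symm⟩
        obtain ⟨h₁, -, -⟩ := (mem_amalg _ _ _ _ _).mp ((hmem x k').mp hp)
        exact h₁
      · intro hx
        obtain ⟨k, hk⟩ := hψ (φ ⟨a⁻¹ * x * a, hx⟩)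
        have hp : (a⁻¹ * x * a, (k : G₂)) ∈ amalg H K φ ψ :=
          (mem_amalg _ _ _ _ _).mpr ⟨hx, k.2, hk.symm⟩
        obtain ⟨h₁, -, -⟩ := (mem_amalg _ _ _ _ _).mp ((hmem2 _ _).mp hp)
        rwa [show a * (a⁻¹ * x * a) * a⁻¹ = x by group] at h₁
    have hKiff : ∀ y, y ∈ K' ↔ b⁻¹ * y * b ∈ K := by
      intro y
      constructor
      · intro hy
        obtain ⟨h', hh'⟩ := hφ' (ψ' ⟨y, hy⟩)
        have hp : ((h' : G₁), y) ∈ amalg H' K' φ' ψ' :=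
          (mem_amalg _ _ _ _ _).mpr ⟨h'.2, hy, hh'⟩
        obtain ⟨-, h₂, -⟩ := (mem_amalg _ _ _ _ _).mp ((hmem _ y).mp hp)
        exact h₂
      · intro hy
        obtain ⟨h, hh⟩ := hφ (ψ ⟨b⁻¹ * y * b, hy⟩)
        have hp : ((h : G₁), b⁻¹ * y * b) ∈ amalg H K φ ψ :=
          (mem_amalg _ _ _ _ _).mpr ⟨h.2, hy, hh⟩
        obtain ⟨-, h₂, -⟩ := (mem_amalg _ _ _ _ _).mp ((hmem2 _ _).mp hp)
        rwa [show b * (b⁻¹ * y * b) * b⁻¹ = y by group] at h₂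
    have hH : H' = H.map (MulAut.conj a).toMonoidHom := by
      ext x
      rw [Subgroup.mem_map_equiv, MulAut.conj_symm_apply]
      exact hHiff x
    have hK : K' = K.map (MulAut.conj b).toMonoidHom := by
      ext y
      rw [Subgroup.mem_map_equiv, MulAut.conj_symm_apply]
      exact hKiff y
    have W : ∀ x₁ x₂ (m₁ : x₁ ∈ H') (m₂ : x₂ ∈ H'), φ' ⟨x₁, m₁⟩ = φ' ⟨x₂, m₂⟩ →
        ∀ (n₁ : a⁻¹ * x₁ * a ∈ H) (n₂ : a⁻¹ * x₂ * a ∈ H),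
          φ ⟨a⁻¹ * x₁ * a, n₁⟩ = φ ⟨a⁻¹ * x₂ * a, n₂⟩ := by
      intro x₁ x₂ m₁ m₂ he n₁ n₂
      obtain ⟨k', hk'⟩ := hψ' (φ' ⟨x₁, m₁⟩)
      have p₁ : (x₁, (k' : G₂)) ∈ amalg H' K' φ' ψ' :=
        (mem_amalg _ _ _ _ _).mpr ⟨m₁, k'.2, hk'.symm⟩
      have p₂ : (x₂, (k' : G₂)) ∈ amalg H' K' φ' ψ' :=
        (mem_amalg _ _ _ _ _).mpr ⟨m₂, k'.2, (hk'.trans he).symm⟩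
      obtain ⟨q₁, q₂, e₁⟩ := (mem_amalg _ _ _ _ _).mp ((hmem _ _).mp p₁)
      obtain ⟨q₁', q₂', e₂⟩ := (mem_amalg _ _ _ _ _).mp ((hmem _ _).mp p₂)
      exact e₁.trans e₂.symm
    have W' : ∀ h₁ h₂ (m₁ : h₁ ∈ H) (m₂ : h₂ ∈ H), φ ⟨h₁, m₁⟩ = φ ⟨h₂, m₂⟩ →
        ∀ (n₁ : a * h₁ * a⁻¹ ∈ H') (n₂ : a * h₂ * a⁻¹ ∈ H'),
          φ' ⟨a * h₁ * a⁻¹, n₁⟩ = φ' ⟨a * h₂ * a⁻¹, n₂⟩ := by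
      intro h₁ h₂ m₁ m₂ he n₁ n₂
      obtain ⟨k, hk⟩ := hψ (φ ⟨h₁, m₁⟩)
      have p₁ : (h₁, (k : G₂)) ∈ amalg H K φ ψ :=
        (mem_amalg _ _ _ _ _).mpr ⟨m₁, k.2, hk.symm⟩
      have p₂ : (h₂, (k : G₂)) ∈ amalg H K φ ψ :=
        (mem_amalg _ _ _ _ _).mpr ⟨m₂, k.2, (hk.trans he).symm⟩
      obtain ⟨q₁, q₂, e₁⟩ := (mem_amalg _ _ _ _ _).mp ((hmem2 _ _).mp p₁)
      obtain ⟨q₁', q₂', e₂⟩ := (mem_amalg _ _ _ _ _).mp ((hmem2 _ _).mp p₂)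
      exact e₁.trans e₂.symm
    set s : L → H' := Function.surjInv hφ' with hs_def
    have hs : ∀ ℓ, φ' (s ℓ) = ℓ := fun ℓ => Function.surjInv_eq hφ' ℓ
    have smem : ∀ ℓ, a⁻¹ * (s ℓ : G₁) * a ∈ H := fun ℓ => (hHiff _).mp (s ℓ).2
    set f : L → L := fun ℓ => φ ⟨a⁻¹ * (s ℓ : G₁) * a, smem ℓ⟩ with hf_def
    have fspec : ∀ x (hx : x ∈ H') (n : a⁻¹ * x * a ∈ H),
        f (φ' ⟨x, hx⟩) = φ ⟨a⁻¹ * x * a, n⟩ := by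
      intro x hx n
      exact W _ _ (s _).2 hx (hs _) _ _
    have fone : f 1 = 1 := by
      have h1 : φ' (⟨1, H'.one_mem⟩ : H') = 1 := map_one φ'
      have n : a⁻¹ * (1 : G₁) * a ∈ H := by
        rw [show a⁻¹ * (1 : G₁) * a = 1 by group]; exact H.one_mem
      calc f 1 = f (φ' ⟨1, H'.one_mem⟩) := by rw [h1]
        _ = φ ⟨a⁻¹ * (1 : G₁) * a, n⟩ := fspec 1 H'.one_mem n
        _ = φ ⟨1, H.one_mem⟩ := hom_congr φ n H.one_mem (by group)
        _ = 1 := map_one φ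
    have fmul : ∀ ℓ₁ ℓ₂, f (ℓ₁ * ℓ₂) = f ℓ₁ * f ℓ₂ := by
      intro ℓ₁ ℓ₂
      have hx : ((s ℓ₁ : G₁) * (s ℓ₂ : G₁)) ∈ H' := H'.mul_mem (s ℓ₁).2 (s ℓ₂).2
      have h1 : φ' ⟨(s ℓ₁ : G₁) * (s ℓ₂ : G₁), hx⟩ = ℓ₁ * ℓ₂ := by
        rw [show (⟨(s ℓ₁ : G₁) * (s ℓ₂ : G₁), hx⟩ : H') = s ℓ₁ * s ℓ₂ from rfl, map_mul,
          hs, hs]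
      have hn : a⁻¹ * ((s ℓ₁ : G₁) * (s ℓ₂ : G₁)) * a ∈ H := by
        rw [show a⁻¹ * ((s ℓ₁ : G₁) * (s ℓ₂ : G₁)) * a =
          (a⁻¹ * (s ℓ₁ : G₁) * a) * (a⁻¹ * (s ℓ₂ : G₁) * a) by group]
        exact H.mul_mem (smem ℓ₁) (smem ℓ₂)
      rw [← h1, fspec _ hx hn]
      show _ = φ ⟨_, smem ℓ₁⟩ * φ ⟨_, smem ℓ₂⟩
      rw [← map_mul]
      exact hom_congr φ _ _ (by group)
    set F : L →* L := { toFun := f, map_one' := fone, map_mul' := fmul } with hF_def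
    have Fsurj : Function.Surjective F := by
      intro ℓ
      obtain ⟨h, hh⟩ := hφ ℓ
      have hm : a * (h : G₁) * a⁻¹ ∈ H' := by
        rw [hHiff, show a⁻¹ * (a * (h : G₁) * a⁻¹) * a = (h : G₁) by group]
        exact h.2
      have hn : a⁻¹ * (a * (h : G₁) * a⁻¹) * a ∈ H := by
        rw [show a⁻¹ * (a * (h : G₁) * a⁻¹) * a = (h : G₁) by group]; exact h.2
      refine ⟨φ' ⟨a * (h : G₁) * a⁻¹, hm⟩, ?_⟩
      show f _ = ℓ
      rw [fspec _ hm hn, hom_congr φ hn h.2 (by group), ← hh]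
    have Finj : Function.Injective F := by
      rw [injective_iff_map_eq_one F]
      intro ℓ hℓ
      have h1 : φ ⟨a⁻¹ * (s ℓ : G₁) * a, smem ℓ⟩ = φ ⟨1, H.one_mem⟩ := by
        rw [show φ (⟨1, H.one_mem⟩ : H) = 1 from map_one φ]
        exact hℓ
      have n₁ : a * (a⁻¹ * (s ℓ : G₁) * a) * a⁻¹ ∈ H' := by
        rw [show a * (a⁻¹ * (s ℓ : G₁) * a) * a⁻¹ = (s ℓ : G₁) by group]
        exact (s ℓ).2
      have n₂ : a * (1 : G₁) * a⁻¹ ∈ H' := by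
        rw [show a * (1 : G₁) * a⁻¹ = 1 by group]
        exact H'.one_mem
      have h2 := W' _ _ (smem ℓ) H.one_mem h1 n₁ n₂
      calc ℓ = φ' (s ℓ) := (hs ℓ).symm
        _ = φ' ⟨a * (a⁻¹ * (s ℓ : G₁) * a) * a⁻¹, n₁⟩ :=
            (hom_congr φ' n₁ (s ℓ).2 (by group)).symm
        _ = φ' ⟨a * (1 : G₁) * a⁻¹, n₂⟩ := h2
        _ = φ' ⟨1, H'.one_mem⟩ := hom_congr φ' n₂ H'.one_mem (by group)
        _ = 1 := map_one φ'
    have fspec2 : ∀ y (hy : y ∈ K') (n : b⁻¹ * y * b ∈ K),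
        f (ψ' ⟨y, hy⟩) = ψ ⟨b⁻¹ * y * b, n⟩ := by
      intro y hy n
      obtain ⟨x', hx'⟩ := hφ' (ψ' ⟨y, hy⟩)
      have p : ((x' : G₁), y) ∈ amalg H' K' φ' ψ' :=
        (mem_amalg _ _ _ _ _).mpr ⟨x'.2, hy, hx'⟩
      obtain ⟨q₁, q₂, e⟩ := (mem_amalg _ _ _ _ _).mp ((hmem _ _).mp p)
      rw [← hx', fspec _ x'.2 q₁]
      exact e
    refine ⟨a, b, MulEquiv.ofBijective F ⟨Finj, Fsurj⟩, hH, hK, ?_, ?_⟩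
    · intro h hh hh'
      show f (φ' ⟨a * h * a⁻¹, hh'⟩) = φ ⟨h, hh⟩
      have n : a⁻¹ * (a * h * a⁻¹) * a ∈ H := by
        rw [show a⁻¹ * (a * h * a⁻¹) * a = h by group]; exact hh
      rw [fspec _ hh' n]
      exact hom_congr φ _ _ (by group)
    · intro k hk hk'
      show f (ψ' ⟨b * k * b⁻¹, hk'⟩) = ψ ⟨k, hk⟩
      have n : b⁻¹ * (b * k * b⁻¹) * b ∈ K := by
        rw [show b⁻¹ * (b * k * b⁻¹) * b = k by group]; exact hk
      rw [fspec2 _ hk' n]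
      exact hom_congr ψ _ _ (by group)
  · rintro ⟨a, b, α, hH, hK, hα, hβ⟩
    refine ⟨(a, b), ?_⟩
    have hHiff : ∀ x, x ∈ H' ↔ a⁻¹ * x * a ∈ H := by
      intro x
      rw [hH, Subgroup.mem_map_equiv, MulAut.conj_symm_apply]
    have hKiff : ∀ y, y ∈ K' ↔ b⁻¹ * y * b ∈ K := by
      intro y
      rw [hK, Subgroup.mem_map_equiv, MulAut.conj_symm_apply]
    ext ⟨x, y⟩
    rw [Subgroup.mem_map_equiv, conj_prod_symm, mem_amalg, mem_amalg]
    constructor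
    · rintro ⟨h₁, h₂, e⟩
      have mx : x ∈ H' := (hHiff x).mpr h₁
      have my : y ∈ K' := (hKiff y).mpr h₂
      refine ⟨mx, my, ?_⟩
      apply α.injective
      have hh' : a * (a⁻¹ * x * a) * a⁻¹ ∈ H' := by
        rw [show a * (a⁻¹ * x * a) * a⁻¹ = x by group]; exact mx
      have hk' : b * (b⁻¹ * y * b) * b⁻¹ ∈ K' := by
        rw [show b * (b⁻¹ * y * b) * b⁻¹ = y by group]; exact my
      have e1 := hα (a⁻¹ * x * a) h₁ hh'
      have e2 := hβ (b⁻¹ * y * b) h₂ hk'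
      rw [hom_congr φ' mx hh' (by group), hom_congr ψ' my hk' (by group), e1, e2]
      exact e
    · rintro ⟨mx, my, e⟩
      have h₁ : a⁻¹ * x * a ∈ H := (hHiff x).mp mx
      have h₂ : b⁻¹ * y * b ∈ K := (hKiff y).mp my
      refine ⟨h₁, h₂, ?_⟩
      have hh' : a * (a⁻¹ * x * a) * a⁻¹ ∈ H' := by
        rw [show a * (a⁻¹ * x * a) * a⁻¹ = x by group]; exact mx
      have hk' : b * (b⁻¹ * y * b) * b⁻¹ ∈ K' := by
        rw [show b * (b⁻¹ * y * b) * b⁻¹ = y by group]; exact my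
      have e1 := hα (a⁻¹ * x * a) h₁ hh'
      have e2 := hβ (b⁻¹ * y * b) h₂ hk'
      rw [← e1, ← e2]
      congr 1
      rw [hom_congr φ' hh' mx (by group), hom_congr ψ' hk' my (by group)]
      exact e
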